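/- Let TR₁>0, α₁∈ℝ, φ₁∈ℝ, M₀∈ℝ³, and let M₁(θ) = E₁(TR₁,θ)R_{φ₁}R_x(α₁)R_{φ₁}ᵀM₀ + E₂(TR₁,θ)M_e be the first step of the IR-bSSFP discrete Bloch dynamics, with (Fréchet) derivative M₁′(θ)h = h₁·(U₁(1)M₀ − (TR₁/T₁²)e^{−TR₁/T₁}M_e) + h₂·U₂(1)M₀ for h=(h₁,h₂)∈ℝ², where U₁(1)=diag(0,0,(TR₁/T₁²)e^{−TR₁/T₁})R(α₁), U₂(1)=diag((TR₁/T₂²)e^{−TR₁/T₂},(TR₁/T₂²)e^{−TR₁/T₂},0)R(α₁), R(α₁)=R_{φ₁}R_x(α₁)R_{φ₁}ᵀ. Then there exists a constant C>0, depending only on TR₁ and ‖M₀‖ (and not on θ or h), such that for all θ∈(0,∞)² and all h∈ℝ² with θ+h∈(0,∞)²: ‖M₁(θ+h) − M₁(θ) − M₁′(θ)h‖ ≤ C‖h‖². -/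

import Mathlib

open Matrix

/-- The equilibrium magnetization `M_e = (0,0,1)`. -/
noncomputable def Me : Fin 3 → ℝ := ![0, 0, 1]

/-- `E₁(TR,θ) = diag(e^{−TR/T₂}, e^{−TR/T₂}, e^{−TR/T₁})`. -/
noncomputable def E1 (TR T1 T2 : ℝ) : Matrix (Fin 3) (Fin 3) ℝ :=
  Matrix.diagonal ![Real.exp (-TR / T2), Real.exp (-TR / T2), Real.exp (-TR / T1)]

/-- `E₂(TR,θ) = 1 − e^{−TR/T₁}`. -/
noncomputable def E2 (TR T1 : ℝ) : ℝ := 1 - Real.exp (-TR / T1)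

/-- The phase-shift rotation `R_φ`. -/
noncomputable def Rphi (φ : ℝ) : Matrix (Fin 3) (Fin 3) ℝ :=
  !![Real.cos φ, Real.sin φ, 0; -Real.sin φ, Real.cos φ, 0; 0, 0, 1]

/-- The flip-angle rotation `R_x(α)`. -/
noncomputable def Rx (α : ℝ) : Matrix (Fin 3) (Fin 3) ℝ :=
  !![1, 0, 0; 0, Real.cos α, Real.sin α; 0, -Real.sin α, Real.cos α]

/-- `R(α) := R_φ R_x(α) R_φᵀ`. -/
noncomputable def Rmat (φ α : ℝ) : Matrix (Fin 3) (Fin 3) ℝ := Rphi φ * Rx α * (Rphi φ)ᵀ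

/-- The IR-bSSFP discrete Bloch dynamics:
`M₀` given, `M_ℓ = E₁(TR_ℓ,θ) R(α_ℓ) M_{ℓ−1} + E₂(TR_ℓ,θ) M_e`. -/
noncomputable def Mseq (α φ TR : ℕ → ℝ) (T1 T2 : ℝ) (M0 : Fin 3 → ℝ) : ℕ → Fin 3 → ℝ
  | 0 => M0
  | ℓ + 1 =>
      (E1 (TR (ℓ + 1)) T1 T2 * Rmat (φ (ℓ + 1)) (α (ℓ + 1))) *ᵥ Mseq α φ TR T1 T2 M0 ℓ
        + E2 (TR (ℓ + 1)) T1 • Me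

/-- `U₁(1)` as in the derivative of the first IR-bSSFP step. -/
noncomputable def U1 (TRl φl αl T1 : ℝ) : Matrix (Fin 3) (Fin 3) ℝ :=
  Matrix.diagonal ![0, 0, TRl / T1 ^ 2 * Real.exp (-TRl / T1)] * Rmat φl αl

/-- `U₂(1)` as in the derivative of the first IR-bSSFP step. -/
noncomputable def U2 (TRl φl αl T2 : ℝ) : Matrix (Fin 3) (Fin 3) ℝ :=
  Matrix.diagonal ![TRl / T2 ^ 2 * Real.exp (-TRl / T2),
    TRl / T2 ^ 2 * Real.exp (-TRl / T2), 0] * Rmat φl αl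

/-- The first step of the IR-bSSFP dynamics,
`M₁(θ) = E₁(TR₁,θ) R_{φ₁} R_x(α₁) R_{φ₁}ᵀ M₀ + E₂(TR₁,θ) M_e`. -/
noncomputable def M1fun (TR1 α1 φ1 : ℝ) (M0 : Fin 3 → ℝ) (T1 T2 : ℝ) : Fin 3 → ℝ :=
  (E1 TR1 T1 T2 * Rmat φ1 α1) *ᵥ M0 + E2 TR1 T1 • Me

/-- The Euclidean norm on `ℝ³`. -/
noncomputable def enorm3 (v : Fin 3 → ℝ) : ℝ := Real.sqrt (∑ i, v i ^ 2)

/-- The Euclidean norm on `ℝ²`. -/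
noncomputable def enorm2 (v : ℝ × ℝ) : ℝ := Real.sqrt (v.1 ^ 2 + v.2 ^ 2)

/-!
The remainder of the first step equals `diag(D₂, D₂, D₁) (R M₀ − M_e)`, where `Dᵢ` is the
first-order Taylor remainder of `g(t) = e^{−TR/t}` at `Tᵢ` with increment `hᵢ`. With `u = TR/t`,
`g''(t) = (u⁴ − 2u³) e^{−u} / TR²`, and `uⁿ e^{−u} ≤ n!` bounds it by `(4! + 2·3!) / TR² = 36 / TR²`
uniformly in `t > 0`, so `|Dᵢ| ≤ 36 hᵢ² / TR²`. Since `R` is orthogonal, `‖R M₀ − M_e‖ ≤ ‖M₀‖ + 1`.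
-/

theorem pow_mul_exp_neg_le_factorial {u : ℝ} (hu : 0 ≤ u) (n : ℕ) :
    u ^ n * Real.exp (-u) ≤ n.factorial := by
  rw [Real.exp_neg, ← div_eq_mul_inv, div_le_iff₀ (Real.exp_pos u), ← div_le_iff₀' (by positivity)]
  exact Real.pow_div_factorial_le_exp u hu n

namespace Matrix

variable {n : Type*} [Fintype n] [DecidableEq n]

theorem norm_toLp_mulVec_of_mem_orthogonalGroup {A : Matrix n n ℝ}
    (hA : A ∈ orthogonalGroup n ℝ) (v : n → ℝ) :
    ‖WithLp.toLp 2 (A *ᵥ v)‖ = ‖WithLp.toLp 2 v‖ := by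
  rw [mem_orthogonalGroup_iff'] at hA
  have hdot : (A *ᵥ v) ⬝ᵥ (A *ᵥ v) = v ⬝ᵥ v := by
    rw [dotProduct_mulVec, vecMul_mulVec, ← mulVec_transpose, transpose_mul, transpose_transpose,
      hA, one_mulVec]
  rw [norm_eq_sqrt_real_inner, norm_eq_sqrt_real_inner, EuclideanSpace.inner_toLp_toLp,
    EuclideanSpace.inner_toLp_toLp]
  simpa using congrArg Real.sqrt hdot

theorem norm_toLp_diagonal_mulVec_le {d : n → ℝ} {c : ℝ} (hc : 0 ≤ c) (hd : ∀ i, |d i| ≤ c)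
    (v : n → ℝ) : ‖WithLp.toLp 2 (diagonal d *ᵥ v)‖ ≤ c * ‖WithLp.toLp 2 v‖ := by
  refine le_of_sq_le_sq ?_ (by positivity)
  rw [mul_pow, EuclideanSpace.real_norm_sq_eq, EuclideanSpace.real_norm_sq_eq, Finset.mul_sum]
  refine Finset.sum_le_sum fun i _ => ?_
  rw [WithLp.ofLp_toLp, WithLp.ofLp_toLp, mulVec_diagonal, mul_pow]
  exact mul_le_mul_of_nonneg_right (sq_le_sq' (abs_le.mp (hd i)).1 (abs_le.mp (hd i)).2)
    (sq_nonneg _)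

end Matrix

theorem Convex.abs_image_sub_sub_mul_deriv_le {f f' f'' : ℝ → ℝ} {s : Set ℝ} {C x y : ℝ}
    (hs : Convex ℝ s) (hf : ∀ z ∈ s, HasDerivWithinAt f (f' z) s z)
    (hf' : ∀ z ∈ s, HasDerivWithinAt f' (f'' z) s z) (hC : ∀ z ∈ s, |f'' z| ≤ C)
    (hx : x ∈ s) (hy : y ∈ s) :
    |f y - f x - (y - x) * f' x| ≤ C * (y - x) ^ 2 := by
  have hseg : segment ℝ x y ⊆ s := hs.segment_subset hx hy
  have hderiv : ∀ z ∈ segment ℝ x y,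
      HasDerivWithinAt (fun z => f z - z * f' x) (f' z - f' x) (segment ℝ x y) z := fun z hz =>
    ((hf z (hseg hz)).mono hseg).sub (by simpa using (hasDerivWithinAt_id z _).mul_const (f' x))
  have hbound : ∀ z ∈ segment ℝ x y, ‖f' z - f' x‖ ≤ C * |y - x| := fun z hz =>
    calc ‖f' z - f' x‖ ≤ C * ‖z - x‖ :=
          hs.norm_image_sub_le_of_norm_hasDerivWithin_le hf' hC hx (hseg hz)
      _ ≤ C * |y - x| := by
          gcongr
          · exact (abs_nonneg _).trans (hC x hx)
          · exact norm_sub_le_of_mem_segment hz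
  have hmvt := (convex_segment x y).norm_image_sub_le_of_norm_hasDerivWithin_le hderiv hbound
    (left_mem_segment ℝ x y) (right_mem_segment ℝ x y)
  rw [Real.norm_eq_abs, Real.norm_eq_abs] at hmvt
  calc |f y - f x - (y - x) * f' x| = |f y - y * f' x - (f x - x * f' x)| := by ring_nf
    _ ≤ C * |y - x| * |y - x| := hmvt
    _ = C * (y - x) ^ 2 := by rw [mul_assoc, ← sq, sq_abs]

theorem hasDerivAt_exp_neg_div (TR : ℝ) {s : ℝ} (hs : s ≠ 0) :
    HasDerivAt (fun t => Real.exp (-TR / t)) (TR / s ^ 2 * Real.exp (-TR / s)) s := by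
  have hdiv : HasDerivAt (fun t => -TR / t) (TR / s ^ 2) s :=
    ((hasDerivAt_inv hs).const_mul (-TR)).congr_deriv (by ring)
  exact hdiv.exp.congr_deriv (mul_comm _ _)

theorem hasDerivAt_div_sq_mul_exp_neg_div (TR : ℝ) {s : ℝ} (hs : s ≠ 0) :
    HasDerivAt (fun t => TR / t ^ 2 * Real.exp (-TR / t))
      ((TR ^ 2 / s ^ 4 - 2 * TR / s ^ 3) * Real.exp (-TR / s)) s := by
  have hsq : HasDerivAt (fun t => TR / t ^ 2) (-2 * TR / s ^ 3) s :=
    (((hasDerivAt_pow 2 s).inv (pow_ne_zero 2 hs)).const_mul TR).congr_deriv (by field_simp; ring)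
  exact (hsq.mul (hasDerivAt_exp_neg_div TR hs)).congr_deriv (by field_simp; ring)

theorem abs_div_pow_four_sub_mul_exp_neg_div_le {TR s : ℝ} (hTR : 0 < TR) (hs : 0 < s) :
    |(TR ^ 2 / s ^ 4 - 2 * TR / s ^ 3) * Real.exp (-TR / s)| ≤ 36 / TR ^ 2 := by
  set u := TR / s with hu
  have hu0 : 0 ≤ u := by positivity
  have h4 : u ^ 4 * Real.exp (-u) ≤ 24 := by
    simpa [Nat.factorial] using pow_mul_exp_neg_le_factorial hu0 4
  have h3 : u ^ 3 * Real.exp (-u) ≤ 6 := by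
    simpa [Nat.factorial] using pow_mul_exp_neg_le_factorial hu0 3
  have hrewrite : (TR ^ 2 / s ^ 4 - 2 * TR / s ^ 3) * Real.exp (-TR / s)
      = (u ^ 4 * Real.exp (-u) - 2 * (u ^ 3 * Real.exp (-u))) / TR ^ 2 := by
    rw [hu, neg_div]; field_simp
  rw [hrewrite, abs_div, abs_of_pos (pow_pos hTR 2), div_le_div_iff_of_pos_right (by positivity),
    abs_le]
  have h3_nonneg := mul_nonneg (pow_nonneg hu0 3) (Real.exp_pos (-u)).le
  have h4_nonneg := mul_nonneg (pow_nonneg hu0 4) (Real.exp_pos (-u)).le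
  constructor <;> linarith

noncomputable def relaxationRemainder (TR t h : ℝ) : ℝ :=
  Real.exp (-TR / (t + h)) - Real.exp (-TR / t) - h * (TR / t ^ 2 * Real.exp (-TR / t))

theorem abs_relaxationRemainder_le {TR t h : ℝ} (hTR : 0 < TR) (ht : 0 < t) (hth : 0 < t + h) :
    |relaxationRemainder TR t h| ≤ 36 / TR ^ 2 * h ^ 2 := by
  have := (convex_Ioi 0).abs_image_sub_sub_mul_deriv_le
    (fun s hs => (hasDerivAt_exp_neg_div TR (ne_of_gt hs)).hasDerivWithinAt)
    (fun s hs => (hasDerivAt_div_sq_mul_exp_neg_div TR (ne_of_gt hs)).hasDerivWithinAt)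
    (fun s hs => abs_div_pow_four_sub_mul_exp_neg_div_le hTR hs) ht hth
  simpa [relaxationRemainder] using this

theorem Rphi_mem_orthogonalGroup (φ : ℝ) : Rphi φ ∈ orthogonalGroup (Fin 3) ℝ := by
  rw [mem_orthogonalGroup_iff]
  ext i j
  fin_cases i <;> fin_cases j <;>
    simp [Rphi, mul_apply, Fin.sum_univ_three, one_apply] <;> nlinarith [Real.sin_sq_add_cos_sq φ]

theorem Rx_mem_orthogonalGroup (α : ℝ) : Rx α ∈ orthogonalGroup (Fin 3) ℝ := by
  rw [mem_orthogonalGroup_iff]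
  ext i j
  fin_cases i <;> fin_cases j <;>
    simp [Rx, mul_apply, Fin.sum_univ_three, one_apply] <;> nlinarith [Real.sin_sq_add_cos_sq α]

theorem Rmat_mem_orthogonalGroup (φ α : ℝ) : Rmat φ α ∈ orthogonalGroup (Fin 3) ℝ := by
  have hφ := Rphi_mem_orthogonalGroup φ
  have hφ' : (Rphi φ)ᵀ ∈ orthogonalGroup (Fin 3) ℝ := by
    simpa [star_eq_conjTranspose] using Unitary.star_mem hφ
  exact mul_mem (mul_mem hφ (Rx_mem_orthogonalGroup α)) hφ'

theorem M1fun_sub_sub_eq_diagonal_mulVec (TR1 α1 φ1 T1 T2 h1 h2 : ℝ) (M0 : Fin 3 → ℝ) :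
    M1fun TR1 α1 φ1 M0 (T1 + h1) (T2 + h2) - M1fun TR1 α1 φ1 M0 T1 T2
      - (h1 • (U1 TR1 φ1 α1 T1 *ᵥ M0 - (TR1 / T1 ^ 2 * Real.exp (-TR1 / T1)) • Me)
         + h2 • (U2 TR1 φ1 α1 T2 *ᵥ M0))
    = diagonal ![relaxationRemainder TR1 T2 h2, relaxationRemainder TR1 T2 h2,
        relaxationRemainder TR1 T1 h1] *ᵥ (Rmat φ1 α1 *ᵥ M0 - Me) := by
  funext i
  fin_cases i <;>
    simp [M1fun, U1, U2, E1, E2, Me, relaxationRemainder, ← mulVec_mulVec, mulVec_diagonal,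
      vecHead, vecTail] <;>
    ring

theorem norm_toLp_Me : ‖WithLp.toLp 2 Me‖ = 1 := by
  simp [EuclideanSpace.norm_eq, Me, Fin.sum_univ_three]

theorem enorm3_eq_norm_toLp (v : Fin 3 → ℝ) : enorm3 v = ‖WithLp.toLp 2 v‖ := by
  simp [enorm3, EuclideanSpace.norm_eq]

theorem enorm2_sq (h1 h2 : ℝ) : enorm2 (h1, h2) ^ 2 = h1 ^ 2 + h2 ^ 2 :=
  Real.sq_sqrt (by positivity)

/-- Quadratic Taylor remainder estimate for the first IR-bSSFP step: there is a constant
`C > 0` depending only on `TR₁` and `M₀` (not on `θ` or `h`) with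
`‖M₁(θ+h) − M₁(θ) − M₁′(θ)h‖ ≤ C ‖h‖²` for all `θ, θ+h ∈ (0,∞)²`. -/
theorem stmt6 (TR1 : ℝ) (hTR1 : 0 < TR1) (M0 : Fin 3 → ℝ) :
    ∃ C > 0, ∀ (α1 φ1 T1 T2 h1 h2 : ℝ),
      0 < T1 → 0 < T2 → 0 < T1 + h1 → 0 < T2 + h2 →
      enorm3 (M1fun TR1 α1 φ1 M0 (T1 + h1) (T2 + h2) - M1fun TR1 α1 φ1 M0 T1 T2
          - (h1 • (U1 TR1 φ1 α1 T1 *ᵥ M0 - (TR1 / T1 ^ 2 * Real.exp (-TR1 / T1)) • Me)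
             + h2 • (U2 TR1 φ1 α1 T2 *ᵥ M0)))
        ≤ C * enorm2 (h1, h2) ^ 2 := by
  refine ⟨36 / TR1 ^ 2 * (‖WithLp.toLp 2 M0‖ + 1), by positivity, ?_⟩
  intro α1 φ1 T1 T2 h1 h2 hT1 hT2 hT1h hT2h
  set D1 := relaxationRemainder TR1 T1 h1
  set D2 := relaxationRemainder TR1 T2 h2
  have hdiag : ∀ i, |![D2, D2, D1] i| ≤ |D1| + |D2| := by
    intro i
    fin_cases i <;> simp [abs_nonneg]
  have hvec : ‖WithLp.toLp 2 (Rmat φ1 α1 *ᵥ M0 - Me)‖ ≤ ‖WithLp.toLp 2 M0‖ + 1 := by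
    rw [WithLp.toLp_sub]
    refine (norm_sub_le _ _).trans_eq ?_
    rw [norm_toLp_mulVec_of_mem_orthogonalGroup (Rmat_mem_orthogonalGroup φ1 α1), norm_toLp_Me]
  rw [M1fun_sub_sub_eq_diagonal_mulVec, enorm3_eq_norm_toLp, enorm2_sq]
  calc _ ≤ (|D1| + |D2|) * ‖WithLp.toLp 2 (Rmat φ1 α1 *ᵥ M0 - Me)‖ :=
        norm_toLp_diagonal_mulVec_le (by positivity) hdiag _
    _ ≤ (36 / TR1 ^ 2 * h1 ^ 2 + 36 / TR1 ^ 2 * h2 ^ 2) * (‖WithLp.toLp 2 M0‖ + 1) := by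
        gcongr
        · exact abs_relaxationRemainder_le hTR1 hT1 hT1h
        · exact abs_relaxationRemainder_le hTR1 hT2 hT2h
    _ = 36 / TR1 ^ 2 * (‖WithLp.toLp 2 M0‖ + 1) * (h1 ^ 2 + h2 ^ 2) := by ring
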